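/- The functions p_t : ℝ → ℝ²/{x=0} induce linearly independent derivations: for each t ∈ ℝ let D_t : A → ℝ be defined on the algebra A = {f ∈ C^∞(ℝ²,ℝ) : f is constant on the line x = 0} by D_t(f) = ∂f/∂x(0, t). Then the family {D_t}_{t ∈ ℝ} is linearly independent in the dual space of A. In particular the span of {D_t} is uncountably-infinite dimensional. -/
import Mathlib

/-- The algebra of smooth functions on `ℝ²` that are constant on the line `x = 0`. -/
def ConstOnAxis : Type := {f : ℝ × ℝ → ℝ // ContDiff ℝ (⊤ : ℕ∞) f ∧ ∀ y : ℝ, f (0, y) = f (0, 0)}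

/-- Test functions: for each finite set `s` and `t ∈ s`, a member of `ConstOnAxis`
whose derivations pick out exactly `t` among `s`.  We use the Lagrange-type
polynomial `f (x, y) = x * ∏_{u ∈ s \ {t}} (y - u) / (t - u)`. -/
lemma exists_test (s : Finset ℝ) {t : ℝ} (ht : t ∈ s) :
    ∃ f : ConstOnAxis, ∀ t' ∈ s,
      deriv (fun x => f.val (x, t')) 0 = if t' = t then 1 else 0 := by
  set φ : ℝ → ℝ := fun y => ∏ u ∈ s.erase t, ((y - u) / (t - u)) with hφdef
  have hφ : ContDiff ℝ (⊤ : ℕ∞) φ :=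
    contDiff_prod fun u _ => (contDiff_id.sub contDiff_const).div_const _
  have hφ2 : ContDiff ℝ (⊤ : ℕ∞) fun p : ℝ × ℝ => φ p.2 := hφ.comp contDiff_snd
  refine ⟨⟨fun p => p.1 * φ p.2, contDiff_fst.mul hφ2, fun y => by simp⟩, ?_⟩
  intro t' ht'
  have hderiv : deriv (fun x : ℝ => x * φ t') 0 = φ t' := by
    have := ((hasDerivAt_id (0 : ℝ)).mul_const (φ t')).deriv
    simpa using this
  show deriv (fun x : ℝ => x * φ t') 0 = _
  rw [hderiv]
  by_cases h : t' = t
  · subst h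
    simp only [if_pos rfl, hφdef]
    refine Finset.prod_eq_one fun u hu => ?_
    exact div_self (sub_ne_zero.mpr (Ne.symm (Finset.ne_of_mem_erase hu)))
  · simp only [h, if_neg, hφdef]
    refine Finset.prod_eq_zero (Finset.mem_erase.mpr ⟨h, ht'⟩) ?_
    simp

/-- The family of derivations `D_t(f) = ∂f/∂x(0, t)`, for `t ∈ ℝ`, on the algebra of
smooth functions constant on the line `x = 0`, is linearly independent; in particular
its span is of uncountably-infinite dimension. -/
theorem derivations_Dt_linearIndependent :
    let D : ℝ → ConstOnAxis → ℝ :=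
      fun t f => deriv (fun x => f.val (x, t)) 0
    LinearIndependent ℝ D ∧
      Cardinal.aleph0 < Module.rank ℝ (Submodule.span ℝ (Set.range D)) := by
  intro D
  have hli : LinearIndependent ℝ D := by
    rw [linearIndependent_iff']
    intro s g hsum t ht
    obtain ⟨f, hf⟩ := exists_test s ht
    have := congrFun hsum f
    simp only [Finset.sum_apply, Pi.smul_apply, Pi.zero_apply, smul_eq_mul] at this
    rw [Finset.sum_congr rfl (fun i hi => by rw [show D i f = _ from hf i hi])] at this
    simpa [mul_ite, Finset.sum_ite_eq', ht] using this
  refine ⟨hli, ?_⟩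
  rw [rank_span hli, Cardinal.mk_range_eq _ hli.injective, Cardinal.mk_real]
  exact Cardinal.aleph0_lt_continuum
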